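/- Let Ω be a commutative semigroup and (A, (*_{α,β})_{α,β∈Ω}) an Ω-zinbiel algebra. Define the symmetrized operations x ∗̂_{α,β} y := x *_{α,β} y + y *_{β,α} x. Then (A, (∗̂_{α,β})) is a commutative Ω-associative algebra: x ∗̂_{α,β} y = y ∗̂_{β,α} x and (x ∗̂_{α,β} y) ∗̂_{αβ,γ} z = x ∗̂_{α,βγ} (y ∗̂_{β,γ} z) for all x,y,z∈A and α,β,γ∈Ω. -/
import Mathlib


/-- Symmetrized product `x ∗̂_{α,β} y := x *_{α,β} y + y *_{β,α} x`. -/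
def zhat {k Ω A : Type*} [Field k] [AddCommGroup A] [Module k A]
    (star : Ω → Ω → A →ₗ[k] A →ₗ[k] A) (α β : Ω) (x y : A) : A :=
  star α β x y + star β α y x

/-- An Ω-zinbiel algebra gives a commutative Ω-associative algebra
via the symmetrized operations. -/
theorem omegaZinbiel_comm_omegaAssoc
    {k Ω A : Type*} [Field k] [CommSemigroup Ω] [AddCommGroup A] [Module k A]
    (star : Ω → Ω → A →ₗ[k] A →ₗ[k] A)
    (hz : ∀ (α β γ : Ω) (x y z : A),
      star α (β * γ) x (star β γ y z)
        = star (α * β) γ (star α β x y) z + star (α * β) γ (star β α y x) z) :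
    (∀ (α β : Ω) (x y : A), zhat star α β x y = zhat star β α y x)
    ∧ (∀ (α β γ : Ω) (x y z : A),
      zhat star (α * β) γ (zhat star α β x y) z
        = zhat star α (β * γ) x (zhat star β γ y z)) := by
  constructor
  · intro α β x y
    simp [zhat, add_comm]
  · intro α β γ x y z
    simp only [zhat, map_add, LinearMap.add_apply]
    have h1 := hz γ α β z x y
    have h2 := hz γ β α z y x
    have h3 := hz α γ β x z y
    have h4 := hz α β γ x y z
    rw [mul_comm γ α] at h1
    rw [mul_comm γ β, mul_comm β α] at h2
    rw [mul_comm γ β, mul_comm α γ] at h3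
    rw [h1, h2, h4, h3, mul_comm γ α]
    abel
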